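/- arXiv:1803.01570 — 2 statements merged into one kernel-verified Lean document; each statement's English description precedes it below -/
import Mathlib

section
/- Let D, N be positive integers, let x_1, …, x_N ∈ ℝ^D, let s_1, …, s_N ∈ {−1, +1}, let λ' > 0, and let ‖·‖ be any norm on ℝ^D with dual norm ‖w‖_* := sup { ⟨w, x⟩ : ‖x‖ ≤ 1 }. Assume the data is non-separable, i.e., there is no w ∈ ℝ^D with s_i ⟨w, x_i⟩ > 0 for all i. Then for EVERY fixed w ∈ ℝ^D, the worst-case perturbed loss equals the regularized loss: sup { Σ_{i=1}^N max(1 − s_i ⟨w, x_i − x̃_i⟩, 0) : x̃_1, …, x̃_N ∈ ℝ^D, Σ_{i=1}^N ‖x̃_i‖ ≤ λ' } = λ' ‖w‖_* + Σ_{i=1}^N max(1 − s_i ⟨w, x_i⟩, 0). -/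
/-!
Perturbing `x i` by `xt i` changes the `i`-th hinge term by at most `|⟪w, xt i⟫| ≤ ‖w‖_* ‖xt i‖`,
so no admissible perturbation gains more than `λ' ‖w‖_*`. Conversely, non-separability gives an
index `i₀` with `s i₀ ⟪w, x i₀⟫ ≤ 0`, where the hinge is in its linear regime; spending the whole
budget there, `xt i₀ = λ' s i₀ v` with `‖v‖ ≤ 1`, gains at least `λ' ⟪w, v⟫`, and the supremum
over `v` is `λ' ‖w‖_*`. The dual norm is finite because in finite dimension every norm dominates
a multiple of the Euclidean one.
-/

open scoped RealInnerProductSpace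

namespace Seminorm

section FiniteDimensional

variable {E : Type*} [NormedAddCommGroup E] [NormedSpace ℝ E] [FiniteDimensional ℝ E]

theorem exists_norm_le_mul_of_finiteDimensional {p : Seminorm ℝ E}
    (hp : ∀ v, p v = 0 → v = 0) : ∃ C > 0, ∀ v, ‖v‖ ≤ C * p v := by
  -- `p` is convex, hence continuous, so it has a positive minimum on the compact unit sphere.
  have hcont : Continuous p := continuousOn_univ.1 (p.convexOn.continuousOn isOpen_univ)
  obtain ⟨m, hm, hmin⟩ := (isCompact_sphere (0 : E) 1).exists_forall_le' hcont.continuousOn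
    (a := 0) fun v hv => (apply_nonneg p v).lt_of_ne' fun h => by simp [hp v h] at hv
  refine ⟨m⁻¹, inv_pos.2 hm, fun v => ?_⟩
  rcases eq_or_ne v 0 with rfl | hv
  · simp
  have hnorm : 0 < ‖v‖ := norm_pos_iff.2 hv
  have hm_le : m ≤ ‖v‖⁻¹ * p v := by
    simpa [map_smul_eq_mul, hnorm.ne'] using hmin (‖v‖⁻¹ • v) (by simp [norm_smul, hnorm.ne'])
  rw [le_inv_mul_iff₀ hnorm] at hm_le
  rw [inv_mul_eq_div, le_div_iff₀ hm]
  linarith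

end FiniteDimensional

theorem sum_apply_single {ι E : Type*} [Fintype ι] [DecidableEq ι] [AddCommGroup E] [Module ℝ E]
    (p : Seminorm ℝ E) (i₀ : ι) (y : E) : ∑ i, p ((Pi.single i₀ y : ι → E) i) = p y := by
  simp [Pi.apply_single (fun _ => p) (fun _ => map_zero p)]

section Dual

variable {E : Type*} [NormedAddCommGroup E] [InnerProductSpace ℝ E]

noncomputable def dual (p : Seminorm ℝ E) (w : E) : ℝ :=
  sSup {r | ∃ v, p v ≤ 1 ∧ r = ⟪w, v⟫}

variable (p : Seminorm ℝ E) (w : E)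

theorem dual_le {b : ℝ} (h : ∀ v, p v ≤ 1 → ⟪w, v⟫ ≤ b) : p.dual w ≤ b :=
  csSup_le ⟨0, 0, by simp, by simp⟩ fun _ ⟨v, hv, hr⟩ => hr ▸ h v hv

variable [FiniteDimensional ℝ E] {p}

theorem bddAbove_inner_of_le_one (hp : ∀ v, p v = 0 → v = 0) :
    BddAbove {r | ∃ v, p v ≤ 1 ∧ r = ⟪w, v⟫} := by
  obtain ⟨C, hC, hnorm⟩ := exists_norm_le_mul_of_finiteDimensional hp
  refine ⟨‖w‖ * C, fun _ ⟨v, hv, hr⟩ => hr ▸ ?_⟩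
  calc ⟪w, v⟫ ≤ ‖w‖ * ‖v‖ := real_inner_le_norm w v
    _ ≤ ‖w‖ * C := by
      gcongr
      simpa using (hnorm v).trans (mul_le_of_le_one_right hC.le hv)

theorem inner_le_dual (hp : ∀ v, p v = 0 → v = 0) {v : E} (hv : p v ≤ 1) : ⟪w, v⟫ ≤ p.dual w :=
  le_csSup (bddAbove_inner_of_le_one w hp) ⟨v, hv, rfl⟩

theorem dual_nonneg (hp : ∀ v, p v = 0 → v = 0) : 0 ≤ p.dual w := by
  simpa using inner_le_dual w hp (v := 0) (by simp)

theorem inner_le_dual_mul (hp : ∀ v, p v = 0 → v = 0) (v : E) : ⟪w, v⟫ ≤ p.dual w * p v := by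
  rcases (apply_nonneg p v).eq_or_lt' with hv | hv
  · simp [hp v hv]
  have := inner_le_dual w hp (v := (p v)⁻¹ • v) (by simp [map_smul_eq_mul, abs_of_pos hv, hv.ne'])
  rw [real_inner_smul_right, inv_mul_le_iff₀ hv] at this
  linarith

theorem abs_inner_le_dual_mul (hp : ∀ v, p v = 0 → v = 0) (v : E) :
    |⟪w, v⟫| ≤ p.dual w * p v := by
  have hneg := inner_le_dual_mul w hp (-v)
  rw [map_neg_eq_map, inner_neg_right] at hneg
  exact abs_le.2 ⟨by linarith, inner_le_dual_mul w hp v⟩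

end Dual

end Seminorm

section HingeLoss

variable {ι E : Type*} [Fintype ι] [NormedAddCommGroup E] [InnerProductSpace ℝ E]

noncomputable def hingeLoss (s : ι → ℝ) (x : ι → E) (w : E) : ℝ :=
  ∑ i, max (1 - s i * ⟪w, x i⟫) 0

theorem max_one_sub_sub_le (a b : ℝ) : max (1 - (a - b)) 0 ≤ max (1 - a) 0 + |b| :=
  max_le (by linarith [le_max_left (1 - a) 0, le_abs_self b])
    (by linarith [le_max_right (1 - a) 0, abs_nonneg b])

variable {s : ι → ℝ} (x : ι → E) (w : E) {p : Seminorm ℝ E}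

theorem hingeLoss_sub_le (hs : ∀ i, |s i| = 1) (xt : ι → E) :
    hingeLoss s (x - xt) w ≤ hingeLoss s x w + ∑ i, |⟪w, xt i⟫| := by
  rw [hingeLoss, hingeLoss, ← Finset.sum_add_distrib]
  gcongr with i
  have := max_one_sub_sub_le (s i * ⟪w, x i⟫) (s i * ⟪w, xt i⟫)
  rwa [abs_mul, hs i, one_mul, ← mul_sub, ← inner_sub_right] at this

theorem hingeLoss_add_le_hingeLoss_sub_single [DecidableEq ι] {i₀ : ι}
    (hi₀ : s i₀ * ⟪w, x i₀⟫ ≤ 1) (y : E) :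
    hingeLoss s x w + s i₀ * ⟪w, y⟫ ≤ hingeLoss s (x - Pi.single i₀ y) w := by
  rw [hingeLoss, hingeLoss, ← Fintype.sum_pi_single' i₀ (s i₀ * ⟪w, y⟫),
    ← Finset.sum_add_distrib]
  gcongr with i
  rcases eq_or_ne i i₀ with rfl | hi
  · simp only [Pi.single_eq_same, Pi.sub_apply, inner_sub_right, max_eq_left (sub_nonneg.2 hi₀)]
    linarith [le_max_left (1 - s i * (⟪w, x i⟫ - ⟪w, y⟫)) 0]
  · simp [hi]

theorem exists_sum_le_hingeLoss_add_le [DecidableEq ι] {i₀ : ι} (hs : |s i₀| = 1)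
    (hi₀ : s i₀ * ⟪w, x i₀⟫ ≤ 1) {lam : ℝ} (hlam : 0 ≤ lam) {v : E} (hv : p v ≤ 1) :
    ∃ xt : ι → E, ∑ i, p (xt i) ≤ lam ∧
      hingeLoss s x w + lam * ⟪w, v⟫ ≤ hingeLoss s (x - xt) w := by
  refine ⟨Pi.single i₀ ((lam * s i₀) • v), ?_, ?_⟩
  · rw [p.sum_apply_single, map_smul_eq_mul, Real.norm_eq_abs, abs_mul, hs, abs_of_nonneg hlam,
      mul_one]
    exact mul_le_of_le_one_right hlam hv
  · have hshift : s i₀ * ⟪w, (lam * s i₀) • v⟫ = lam * ⟪w, v⟫ := by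
      have hsq : s i₀ * s i₀ = 1 := by rw [← abs_mul_abs_self, hs, one_mul]
      rw [real_inner_smul_right]
      linear_combination (lam * ⟪w, v⟫) * hsq
    simpa [hshift] using hingeLoss_add_le_hingeLoss_sub_single x w hi₀ ((lam * s i₀) • v)

variable [FiniteDimensional ℝ E]

theorem hingeLoss_sub_le_add_dual_mul (hp : ∀ v, p v = 0 → v = 0) (hs : ∀ i, |s i| = 1)
    (xt : ι → E) : hingeLoss s (x - xt) w ≤ hingeLoss s x w + p.dual w * ∑ i, p (xt i) := by
  rw [Finset.mul_sum]
  grw [hingeLoss_sub_le x w hs xt]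
  gcongr with i
  exact p.abs_inner_le_dual_mul w hp (xt i)

end HingeLoss

theorem worst_case_perturbed_loss_eq_regularized_loss_general
    (D N : ℕ)
    (x : Fin N → EuclideanSpace ℝ (Fin D)) (s : Fin N → ℝ)
    (hs : ∀ i, s i = 1 ∨ s i = -1)
    (lam : ℝ) (hlam : 0 < lam)
    (n : EuclideanSpace ℝ (Fin D) → ℝ)
    (hn_def : ∀ v, n v = 0 ↔ v = 0)
    (hn_homog : ∀ (c : ℝ) (v), n (c • v) = |c| * n v)
    (hn_tri : ∀ v w, n (v + w) ≤ n v + n w)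
    (hnonsep : ¬ ∃ w : EuclideanSpace ℝ (Fin D), ∀ i, 0 < s i * ⟪w, x i⟫)
    (dualNorm : EuclideanSpace ℝ (Fin D) → ℝ)
    (hdual : ∀ w, dualNorm w = sSup {r : ℝ | ∃ v, n v ≤ 1 ∧ r = ⟪w, v⟫}) :
    ∀ w : EuclideanSpace ℝ (Fin D),
      sSup {r : ℝ | ∃ xt : Fin N → EuclideanSpace ℝ (Fin D),
          (∑ i, n (xt i)) ≤ lam ∧
          r = ∑ i, max (1 - s i * ⟪w, x i - xt i⟫) 0} =
        lam * dualNorm w + ∑ i, max (1 - s i * ⟪w, x i⟫) 0 := by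
  intro w
  let p : Seminorm ℝ (EuclideanSpace ℝ (Fin D)) := Seminorm.of n hn_tri hn_homog
  have hp : ∀ v, p v = 0 → v = 0 := fun v => (hn_def v).1
  have hs_abs : ∀ i, |s i| = 1 := fun i => by rcases hs i with h | h <;> simp [h]
  obtain ⟨i₀, hi₀⟩ : ∃ i₀, s i₀ * ⟪w, x i₀⟫ ≤ 0 := by push Not at hnonsep; exact hnonsep w
  rw [hdual w]
  change sSup _ = lam * p.dual w + hingeLoss s x w
  refine IsLUB.csSup_eq ⟨?_, fun b hb => ?_⟩ ⟨_, 0, by simpa [(hn_def 0).2 rfl] using hlam.le, rfl⟩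
  · rintro _ ⟨xt, hxt, rfl⟩
    calc hingeLoss s (x - xt) w ≤ hingeLoss s x w + p.dual w * ∑ i, p (xt i) :=
          hingeLoss_sub_le_add_dual_mul x w hp hs_abs xt
      _ ≤ lam * p.dual w + hingeLoss s x w := by
          rw [add_comm, mul_comm]
          gcongr
          exacts [p.dual_nonneg w hp, hxt]
  · suffices p.dual w ≤ (b - hingeLoss s x w) / lam by
      rw [le_div_iff₀ hlam] at this
      linarith
    refine p.dual_le w fun v hv => ?_
    obtain ⟨xt, hbudget, hgain⟩ :=
      exists_sum_le_hingeLoss_add_le x w (hs_abs i₀) (hi₀.trans zero_le_one) hlam.le hv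
    have hle : hingeLoss s (x - xt) w ≤ b := hb ⟨xt, hbudget, rfl⟩
    rw [le_div_iff₀ hlam]
    linarith

/-- For every fixed weight vector `w`, under non-separability of the data,
the worst-case perturbed hinge loss (perturbations bounded in total by `λ'` in an
arbitrary norm) equals the dual-norm-regularized hinge loss. -/
theorem worst_case_perturbed_loss_eq_regularized_loss
    (D N : ℕ) (hD : 0 < D) (hN : 0 < N)
    (x : Fin N → EuclideanSpace ℝ (Fin D)) (s : Fin N → ℝ)
    (hs : ∀ i, s i = 1 ∨ s i = -1)
    (lam : ℝ) (hlam : 0 < lam)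
    (n : EuclideanSpace ℝ (Fin D) → ℝ)
    (hn_nonneg : ∀ v, 0 ≤ n v)
    (hn_def : ∀ v, n v = 0 ↔ v = 0)
    (hn_homog : ∀ (c : ℝ) (v), n (c • v) = |c| * n v)
    (hn_tri : ∀ v w, n (v + w) ≤ n v + n w)
    (hnonsep : ¬ ∃ w : EuclideanSpace ℝ (Fin D), ∀ i, 0 < s i * ⟪w, x i⟫)
    (dualNorm : EuclideanSpace ℝ (Fin D) → ℝ)
    (hdual : ∀ w, dualNorm w = sSup {r : ℝ | ∃ v, n v ≤ 1 ∧ r = ⟪w, v⟫}) :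
    ∀ w : EuclideanSpace ℝ (Fin D),
      sSup {r : ℝ | ∃ xt : Fin N → EuclideanSpace ℝ (Fin D),
          (∑ i, n (xt i)) ≤ lam ∧
          r = ∑ i, max (1 - s i * ⟪w, x i - xt i⟫) 0} =
        lam * dualNorm w + ∑ i, max (1 - s i * ⟪w, x i⟫) 0 :=
  worst_case_perturbed_loss_eq_regularized_loss_general D N x s hs lam hlam n hn_def hn_homog hn_tri
    hnonsep dualNorm hdual
end

section
/- Let D, N be positive integers, let x_1, …, x_N ∈ ℝ^D, let s_1, …, s_N ∈ {−1, +1}, let λ' ≥ 0, and let ‖·‖ be any norm on ℝ^D with dual norm ‖w‖_* := sup { ⟨w, x⟩ : ‖x‖ ≤ 1 }. Then, without any separability assumption, for every w ∈ ℝ^D and every choice of perturbations x̃_1, …, x̃_N ∈ ℝ^D with Σ_{i=1}^N ‖x̃_i‖ ≤ λ', one has Σ_{i=1}^N max(1 − s_i ⟨w, x_i − x̃_i⟩, 0) ≤ λ' ‖w‖_* + Σ_{i=1}^N max(1 − s_i ⟨w, x_i⟩, 0); in particular the worst-case perturbed loss never exceeds the regularized loss. -/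
/-!
A perturbation `x̃` can raise a hinge loss by at most `|⟨w, x̃⟩|`, since the hinge is
1-Lipschitz and `|s| = 1`; and `|⟨w, x̃⟩| ≤ ‖w‖_* ‖x̃‖` by the definition of the dual norm.
Summing over the sample and using `∑ ‖x̃ᵢ‖ ≤ λ'` gives the claim. The only subtle point is that
the supremum defining `‖w‖_*` is finite, which holds because in finite dimension every norm
dominates a multiple of the Euclidean one.
-/

open scoped RealInnerProductSpace

namespace Seminorm

variable {E : Type*} [NormedAddCommGroup E]

theorem continuous_of_finiteDimensional [NormedSpace ℝ E] [FiniteDimensional ℝ E]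
    (p : Seminorm ℝ E) : Continuous p :=
  continuousOn_univ.mp (p.convexOn.continuousOn isOpen_univ)

theorem exists_pos_mul_norm_le [NormedSpace ℝ E] [FiniteDimensional ℝ E] (p : Seminorm ℝ E)
    (hp : ∀ v, p v = 0 → v = 0) : ∃ c > 0, ∀ v, c * ‖v‖ ≤ p v := by
  rcases subsingleton_or_nontrivial E with hE | hE
  · exact ⟨1, one_pos, fun v => by simp [Subsingleton.elim v 0]⟩
  obtain ⟨u, hu, hmin⟩ := (isCompact_sphere (0 : E) 1).exists_isMinOn
    (NormedSpace.sphere_nonempty.2 zero_le_one) p.continuous_of_finiteDimensional.continuousOn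
  have hu_norm : ‖u‖ = 1 := by simpa using hu
  have hu_pos : 0 < p u := (apply_nonneg p u).lt_of_ne fun h =>
    by simp [hp u h.symm] at hu_norm
  refine ⟨p u, hu_pos, fun v => ?_⟩
  rcases eq_or_ne v 0 with rfl | hv
  · simp
  have hv_norm : ‖v‖ ≠ 0 := norm_ne_zero_iff.2 hv
  have h_normalized : ‖v‖⁻¹ • v ∈ Metric.sphere (0 : E) 1 := by
    simp [norm_smul, hv_norm]
  have h_min : p u ≤ p (‖v‖⁻¹ • v) := hmin h_normalized
  rwa [map_smul_eq_mul, norm_inv, norm_norm, le_inv_mul_iff₀ (norm_pos_iff.2 hv),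
    mul_comm] at h_min

variable [InnerProductSpace ℝ E]

noncomputable def dualNorm (p : Seminorm ℝ E) (w : E) : ℝ :=
  sSup {r : ℝ | ∃ v, p v ≤ 1 ∧ r = ⟪w, v⟫}

variable [FiniteDimensional ℝ E] {p : Seminorm ℝ E}

theorem bddAbove_inner_unitBall (hp : ∀ v, p v = 0 → v = 0) (w : E) :
    BddAbove {r : ℝ | ∃ v, p v ≤ 1 ∧ r = ⟪w, v⟫} := by
  obtain ⟨c, hc, hpc⟩ := p.exists_pos_mul_norm_le hp
  refine ⟨‖w‖ * c⁻¹, ?_⟩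
  rintro _ ⟨v, hv, rfl⟩
  have hv_norm : ‖v‖ ≤ c⁻¹ := by
    simpa using (le_inv_mul_iff₀ hc).2 ((hpc v).trans hv)
  exact (real_inner_le_norm w v).trans (mul_le_mul_of_nonneg_left hv_norm (norm_nonneg w))

theorem dualNorm_nonneg (hp : ∀ v, p v = 0 → v = 0) (w : E) : 0 ≤ p.dualNorm w :=
  le_csSup (bddAbove_inner_unitBall hp w) ⟨0, by simp, by simp⟩

theorem inner_le_dualNorm_mul (hp : ∀ v, p v = 0 → v = 0) (w v : E) :
    ⟪w, v⟫ ≤ p.dualNorm w * p v := by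
  rcases (apply_nonneg p v).eq_or_lt with h | h
  · simp [hp v h.symm]
  have h_unit : ⟪w, (p v)⁻¹ • v⟫ ≤ p.dualNorm w :=
    le_csSup (bddAbove_inner_unitBall hp w)
      ⟨(p v)⁻¹ • v, by simp [map_smul_eq_mul, abs_of_pos h, h.ne'], rfl⟩
  rwa [real_inner_smul_right, inv_mul_le_iff₀ h, mul_comm] at h_unit

theorem abs_inner_le_dualNorm_mul (hp : ∀ v, p v = 0 → v = 0) (w v : E) :
    |⟪w, v⟫| ≤ p.dualNorm w * p v := by
  refine abs_le.2 ⟨?_, inner_le_dualNorm_mul hp w v⟩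
  have := inner_le_dualNorm_mul hp w (-v)
  rw [inner_neg_right, map_neg_eq_map] at this
  linarith

end Seminorm

theorem hinge_sub_le {s a b c : ℝ} (hs : |s| ≤ 1) (hb : |b| ≤ c) :
    max (1 - s * (a - b)) 0 ≤ max (1 - s * a) 0 + c := by
  have hsb : s * b ≤ c :=
    (le_abs_self _).trans <| by
      rw [abs_mul]; nlinarith [abs_nonneg s, abs_nonneg b]
  refine max_le ?_ (add_nonneg (le_max_right _ _) ((abs_nonneg b).trans hb))
  linarith [le_max_left (1 - s * a) 0]

theorem perturbed_loss_le_regularized_loss_general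
    (D N : ℕ)
    (x : Fin N → EuclideanSpace ℝ (Fin D)) (s : Fin N → ℝ)
    (hs : ∀ i, s i = 1 ∨ s i = -1)
    (lam : ℝ)
    (n : EuclideanSpace ℝ (Fin D) → ℝ)
    (hn_def : ∀ v, n v = 0 ↔ v = 0)
    (hn_homog : ∀ (c : ℝ) (v), n (c • v) = |c| * n v)
    (hn_tri : ∀ v w, n (v + w) ≤ n v + n w)
    (dualNorm : EuclideanSpace ℝ (Fin D) → ℝ)
    (hdual : ∀ w, dualNorm w = sSup {r : ℝ | ∃ v, n v ≤ 1 ∧ r = ⟪w, v⟫}) :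
    ∀ (w : EuclideanSpace ℝ (Fin D)) (xt : Fin N → EuclideanSpace ℝ (Fin D)),
      (∑ i, n (xt i)) ≤ lam →
      (∑ i, max (1 - s i * ⟪w, x i - xt i⟫) 0) ≤
        lam * dualNorm w + ∑ i, max (1 - s i * ⟪w, x i⟫) 0 := by
  intro w xt hxt
  let p : Seminorm ℝ (EuclideanSpace ℝ (Fin D)) := .of n hn_tri hn_homog
  have hp : ∀ v, p v = 0 → v = 0 := fun v => (hn_def v).1
  have hdual_eq : dualNorm w = p.dualNorm w := hdual w
  have hs_abs : ∀ i, |s i| ≤ 1 := fun i => by rcases hs i with h | h <;> simp [h]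
  calc ∑ i, max (1 - s i * ⟪w, x i - xt i⟫) 0
      ≤ ∑ i, (max (1 - s i * ⟪w, x i⟫) 0 + dualNorm w * n (xt i)) :=
        Finset.sum_le_sum fun i _ => by
          rw [inner_sub_right, hdual_eq]
          exact hinge_sub_le (hs_abs i) (p.abs_inner_le_dualNorm_mul hp w (xt i))
    _ = dualNorm w * ∑ i, n (xt i) + ∑ i, max (1 - s i * ⟪w, x i⟫) 0 := by
        rw [Finset.sum_add_distrib, Finset.mul_sum, add_comm]
    _ ≤ lam * dualNorm w + ∑ i, max (1 - s i * ⟪w, x i⟫) 0 := by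
        rw [mul_comm lam]
        gcongr
        exact hdual_eq ▸ p.dualNorm_nonneg hp w

/-- Without any separability assumption, for every weight vector `w` and every
admissible choice of perturbations (total norm at most `λ'`), the perturbed hinge loss is at
most the dual-norm-regularized hinge loss. -/
theorem perturbed_loss_le_regularized_loss
    (D N : ℕ) (hD : 0 < D) (hN : 0 < N)
    (x : Fin N → EuclideanSpace ℝ (Fin D)) (s : Fin N → ℝ)
    (hs : ∀ i, s i = 1 ∨ s i = -1)
    (lam : ℝ) (hlam : 0 ≤ lam)
    (n : EuclideanSpace ℝ (Fin D) → ℝ)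
    (hn_nonneg : ∀ v, 0 ≤ n v)
    (hn_def : ∀ v, n v = 0 ↔ v = 0)
    (hn_homog : ∀ (c : ℝ) (v), n (c • v) = |c| * n v)
    (hn_tri : ∀ v w, n (v + w) ≤ n v + n w)
    (dualNorm : EuclideanSpace ℝ (Fin D) → ℝ)
    (hdual : ∀ w, dualNorm w = sSup {r : ℝ | ∃ v, n v ≤ 1 ∧ r = ⟪w, v⟫}) :
    ∀ (w : EuclideanSpace ℝ (Fin D)) (xt : Fin N → EuclideanSpace ℝ (Fin D)),
      (∑ i, n (xt i)) ≤ lam →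
      (∑ i, max (1 - s i * ⟪w, x i - xt i⟫) 0) ≤
        lam * dualNorm w + ∑ i, max (1 - s i * ⟪w, x i⟫) 0 :=
  perturbed_loss_le_regularized_loss_general D N x s hs lam n hn_def hn_homog hn_tri dualNorm hdual
end
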